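/- Let H be a separable complex Hilbert space, let M ⊆ B(H) be a von Neumann algebra, let d ∈ ℕ with d ≥ 2, and let ψ ∈ H be a unit vector. Then the set E(M, ψ, d) of all tuples α : Fin d → ℝ with α i > 0 for all i and ∑ i, (α i)^2 = 1 for which there exists a contraction R in M_d ⊗ M such that (R, ψ) is a monopartite exact embezzlement protocol for α in (M, H), is countable. -/

import Mathlib

/-! If `(R, ψ)` is an exact protocol for `α`, then `∑ₖ ‖R k 0 ψ‖² = ∑ₖ αₖ² = ‖ψ‖²`, and the first
column of `R` is a contraction, so `ψ = ∑ₖ (R k 0)* (R k 0) ψ`. Expanding `⟪R i 0 ψ, S j 0 ψ⟫`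
for two protocols `(R, ψ)`, `(S, ψ)` for `α`, `β` with these identities and the protocol equation
shows that it equals both `αᵢ² m` and `βⱼ² m` for the same scalar `m`; hence the vectors `R i 0 ψ`
of norm `αᵢ` are orthogonal for distinct coefficients. A separable Hilbert space carries only
countably many pairwise orthogonal nonzero vectors, so only countably many coefficients occur. -/

open scoped InnerProductSpace
open ContinuousLinearMap

/-- The block operator on `ℓ²(Fin d; H)` associated with a `d × d` matrix of operators on `H`,
acting by `(R x) i = ∑ j, (R i j) (x j)`. -/
noncomputable def blockOp {H : Type*} [NormedAddCommGroup H] [InnerProductSpace ℂ H] {d : ℕ}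
    (R : Fin d → Fin d → H →L[ℂ] H) :
    (PiLp 2 fun _ : Fin d => H) →L[ℂ] (PiLp 2 fun _ : Fin d => H) :=
  (((PiLp.continuousLinearEquiv 2 ℂ (fun _ : Fin d => H)).symm :
      (∀ _ : Fin d, H) →L[ℂ] (PiLp 2 fun _ : Fin d => H))) ∘L
    (ContinuousLinearMap.pi fun i => ∑ j, (R i j) ∘L (ContinuousLinearMap.proj j)) ∘L
    (((PiLp.continuousLinearEquiv 2 ℂ (fun _ : Fin d => H)) :
      (PiLp 2 fun _ : Fin d => H) →L[ℂ] (∀ _ : Fin d, H)))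

variable {H : Type*} [NormedAddCommGroup H] [InnerProductSpace ℂ H] [CompleteSpace H]

/-- `R` is a contraction in `M_d ⊗ M`: all blocks lie in `M` and the block operator on
`ℓ²(Fin d; H)` has operator norm at most `1`. -/
def IsContractionIn (M : VonNeumannAlgebra H) {d : ℕ}
    (R : Fin d → Fin d → H →L[ℂ] H) : Prop :=
  (∀ i j, R i j ∈ M) ∧ ‖blockOp R‖ ≤ 1

/-- A bipartite exact embezzlement protocol for `α` in `(M, M', H)`: `R` is a contraction in
`M_d ⊗ M`, `T` is a contraction with blocks in the commutant `M'`, `ψ` is a unit vector, and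
`(R i 0)(T j 0) ψ = δ_{ij} α i • ψ` for all `i, j`. -/
def BipartiteProtocol (M : VonNeumannAlgebra H) {d : ℕ} [NeZero d] (α : Fin d → ℝ)
    (R T : Fin d → Fin d → H →L[ℂ] H) (ψ : H) : Prop :=
  IsContractionIn M R ∧ IsContractionIn M.commutant T ∧ ‖ψ‖ = 1 ∧
    ∀ i j, (R i 0) ((T j 0) ψ) = (if i = j then (α i : ℂ) else 0) • ψ

/-- A monopartite exact embezzlement protocol for `α` in `(M, H)`: `R` is a contraction in
`M_d ⊗ M`, `ψ` is a unit vector, and `⟨(R i 0)* X (R j 0) ψ, ψ⟩ = δ_{ij} (α i)² ⟨X ψ, ψ⟩`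
for all `X ∈ M` and all `i, j`. -/
def MonopartiteProtocol (M : VonNeumannAlgebra H) {d : ℕ} [NeZero d] (α : Fin d → ℝ)
    (R : Fin d → Fin d → H →L[ℂ] H) (ψ : H) : Prop :=
  IsContractionIn M R ∧ ‖ψ‖ = 1 ∧
    ∀ X ∈ M, ∀ i j : Fin d,
      ⟪(adjoint (R i 0)) (X ((R j 0) ψ)), ψ⟫_ℂ
        = (if i = j then ((α i : ℂ)) ^ 2 else 0) * ⟪X ψ, ψ⟫_ℂ

/-- The orthogonal projection of `H` onto the closure of `{Y ψ : Y ∈ S}`, as an operator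
on `H`. -/
noncomputable def suppProjOn (S : Set (H →L[ℂ] H)) (ψ : H) : H →L[ℂ] H :=
  letI K := (Submodule.span ℂ ((fun Y : H →L[ℂ] H => Y ψ) '' S)).topologicalClosure
  K.subtypeL ∘L (K.orthogonalProjectionOnto : H →L[ℂ] K)

/-- The support projection of the state `⟨· ψ, ψ⟩` on `M`: the orthogonal projection onto
the closure of `M' ψ`. -/
noncomputable def suppP (M : VonNeumannAlgebra H) (ψ : H) : H →L[ℂ] H :=
  suppProjOn (M.commutant : Set (H →L[ℂ] H)) ψ

/-- The support projection of the state `⟨· ψ, ψ⟩` on `M'`: the orthogonal projection onto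
the closure of `M ψ`. -/
noncomputable def suppP' (M : VonNeumannAlgebra H) (ψ : H) : H →L[ℂ] H :=
  suppProjOn (M : Set (H →L[ℂ] H)) ψ

section Hilbert

variable {𝕜 E F : Type*} [RCLike 𝕜] [NormedAddCommGroup E] [InnerProductSpace 𝕜 E]
  [NormedAddCommGroup F] [InnerProductSpace 𝕜 F]

lemma Pairwise.countable_of_inner_eq_zero [TopologicalSpace.SeparableSpace E] {ι : Type*}
    {v : ι → E} (hv : ∀ i, v i ≠ 0) (horth : Pairwise fun i j => ⟪v i, v j⟫_𝕜 = 0) :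
    Countable ι := by
  set u : ι → E := fun i => (‖v i‖ : 𝕜)⁻¹ • v i
  have hu : Orthonormal 𝕜 u := by
    refine ⟨fun i => norm_smul_inv_norm (hv i), fun i j hij => ?_⟩
    simp only [u, inner_smul_left, inner_smul_right, horth hij, mul_zero]
  refine Pairwise.countable_of_isOpen_disjoint (s := fun i => Metric.ball (u i) (1 / 2))
    (fun i j hij => Metric.ball_disjoint_ball ?_) (fun _ => Metric.isOpen_ball)
    (fun i => Metric.nonempty_ball.2 one_half_pos)
  have hdist : dist (u i) (u j) ^ 2 = 2 := by
    rw [dist_eq_norm, @norm_sub_sq 𝕜, hu.1 i, hu.1 j, hu.2 hij]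
    norm_num
  nlinarith [dist_nonneg (x := u i) (y := u j)]

variable [CompleteSpace E] [CompleteSpace F]

lemma ContinuousLinearMap.adjoint_apply_apply_self {C : E →L[𝕜] F} (hC : ‖C‖ ≤ 1) {ψ : E}
    (hψ : ‖C ψ‖ = ‖ψ‖) : adjoint C (C ψ) = ψ := by
  set w := adjoint C (C ψ)
  have hwψ : ⟪w, ψ⟫_𝕜 = (‖ψ‖ ^ 2 : ℝ) := by
    rw [adjoint_inner_left, inner_self_eq_norm_sq_to_K, hψ]; norm_cast
  have hw : ‖w‖ ≤ ‖ψ‖ := by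
    calc ‖w‖ ≤ ‖adjoint C‖ * ‖C ψ‖ := le_opNorm _ _
      _ ≤ 1 * ‖ψ‖ := by rw [LinearIsometryEquiv.norm_map, hψ]; gcongr
      _ = ‖ψ‖ := one_mul _
  have hsq : ‖w - ψ‖ ^ 2 ≤ 0 := by
    rw [@norm_sub_sq 𝕜, hwψ, RCLike.ofReal_re]
    nlinarith [norm_nonneg w]
  exact sub_eq_zero.1 (norm_eq_zero.1 (pow_eq_zero_iff two_ne_zero |>.1
    (le_antisymm hsq (sq_nonneg _))))

end Hilbert

section Column

variable {E : Type*} [NormedAddCommGroup E] [InnerProductSpace ℂ E] {d : ℕ}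

noncomputable def column [NeZero d] (R : Fin d → Fin d → E →L[ℂ] E) :
    E →L[ℂ] (PiLp 2 fun _ : Fin d => E) :=
  (((PiLp.continuousLinearEquiv 2 ℂ (fun _ : Fin d => E)).symm :
      (∀ _ : Fin d, E) →L[ℂ] (PiLp 2 fun _ : Fin d => E))) ∘L
    ContinuousLinearMap.pi fun k => R k 0

@[simp]
lemma column_apply [NeZero d] (R : Fin d → Fin d → E →L[ℂ] E) (ξ : E) (k : Fin d) :
    column R ξ k = R k 0 ξ := rfl

lemma blockOp_apply (R : Fin d → Fin d → E →L[ℂ] E) (x : PiLp 2 fun _ : Fin d => E)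
    (i : Fin d) : blockOp R x i = ∑ j, R i j (x j) := by
  simp [blockOp]

lemma column_eq_blockOp_single [NeZero d] (R : Fin d → Fin d → E →L[ℂ] E) (ξ : E) :
    column R ξ = blockOp R (PiLp.single 2 0 ξ) := by
  ext k
  simp [blockOp_apply, PiLp.single_apply, apply_ite]

lemma norm_column_le [NeZero d] {R : Fin d → Fin d → E →L[ℂ] E} (hR : ‖blockOp R‖ ≤ 1) :
    ‖column R‖ ≤ 1 :=
  opNorm_le_bound _ zero_le_one fun ξ => by
    rw [column_eq_blockOp_single, one_mul]
    calc ‖blockOp R (PiLp.single 2 0 ξ)‖ ≤ ‖blockOp R‖ * ‖PiLp.single 2 (0 : Fin d) ξ‖ :=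
          le_opNorm _ _
      _ ≤ ‖ξ‖ := by
        rw [PiLp.norm_single 2 (fun _ : Fin d => E)]
        exact mul_le_of_le_one_left (norm_nonneg ξ) hR

lemma norm_column_apply_sq [NeZero d] (R : Fin d → Fin d → E →L[ℂ] E) (ξ : E) :
    ‖column R ξ‖ ^ 2 = ∑ k, ‖R k 0 ξ‖ ^ 2 := by
  rw [PiLp.norm_sq_eq_of_L2 (fun _ : Fin d => E)]
  rfl

lemma adjoint_column_apply [CompleteSpace E] [NeZero d] (R : Fin d → Fin d → E →L[ℂ] E)
    (x : PiLp 2 fun _ : Fin d => E) : adjoint (column R) x = ∑ k, adjoint (R k 0) (x k) := by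
  refine ext_inner_right ℂ fun η => ?_
  simp [adjoint_inner_left, sum_inner, PiLp.inner_apply]

end Column

namespace MonopartiteProtocol

variable {M : VonNeumannAlgebra H} {d : ℕ} [NeZero d] {α β : Fin d → ℝ}
  {R S : Fin d → Fin d → H →L[ℂ] H} {ψ : H}

lemma norm_apply_sq (hR : MonopartiteProtocol M α R ψ) (i : Fin d) :
    ‖R i 0 ψ‖ ^ 2 = α i ^ 2 := by
  have h := hR.2.2 1 (one_mem M) i i
  rw [if_pos rfl, one_apply_eq_self, one_apply_eq_self, adjoint_inner_left,
    inner_self_eq_norm_sq_to_K, inner_self_eq_norm_sq_to_K, hR.2.1] at h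
  norm_num at h
  exact_mod_cast h

lemma sum_adjoint_apply_apply (hR : MonopartiteProtocol M α R ψ) (hα : ∑ i, α i ^ 2 = 1) :
    ∑ k, adjoint (R k 0) (R k 0 ψ) = ψ := by
  have hψ : ‖column R ψ‖ = ‖ψ‖ := by
    rw [← sq_eq_sq₀ (norm_nonneg _) (norm_nonneg _), norm_column_apply_sq, hR.2.1, one_pow]
    simp_rw [hR.norm_apply_sq, hα]
  have h := adjoint_apply_apply_self (𝕜 := ℂ) (C := column R) (norm_column_le hR.1.2) hψ
  conv_rhs => rw [← h]
  rw [adjoint_column_apply]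
  rfl

lemma adjoint_mem (hR : MonopartiteProtocol M α R ψ) (i j : Fin d) : adjoint (R i j) ∈ M :=
  star_eq_adjoint (R i j) ▸ star_mem (hR.1.1 i j)

lemma inner_apply_right (hR : MonopartiteProtocol M α R ψ) (hα : ∑ i, α i ^ 2 = 1)
    {Y : H →L[ℂ] H} (hY : Y ∈ M) (j : Fin d) :
    ⟪Y ψ, R j 0 ψ⟫_ℂ = (α j : ℂ) ^ 2 * ⟪Y (adjoint (R j 0) ψ), ψ⟫_ℂ := by
  have hterm : ∀ k, ⟪Y (adjoint (R k 0) (R k 0 ψ)), R j 0 ψ⟫_ℂ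
      = if j = k then (α j : ℂ) ^ 2 * ⟪Y (adjoint (R k 0) ψ), ψ⟫_ℂ else 0 := by
    intro k
    rw [← adjoint_inner_left]
    have h := hR.2.2 _ (mul_mem hY (hR.adjoint_mem k 0)) j k
    refine h.trans ?_
    split_ifs with hjk
    · subst hjk; rfl
    · exact zero_mul _
  calc ⟪Y ψ, R j 0 ψ⟫_ℂ = ⟪Y (∑ k, adjoint (R k 0) (R k 0 ψ)), R j 0 ψ⟫_ℂ := by
        rw [hR.sum_adjoint_apply_apply hα]
    _ = _ := by
      rw [map_sum, sum_inner, Finset.sum_congr rfl fun k _ => hterm k, Finset.sum_ite_eq]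
      simp

lemma inner_apply_eq_zero (hR : MonopartiteProtocol M α R ψ) (hα : ∑ i, α i ^ 2 = 1)
    (hS : MonopartiteProtocol M β S ψ) (hβ : ∑ i, β i ^ 2 = 1) {i j : Fin d}
    (hne : α i ^ 2 ≠ β j ^ 2) : ⟪R i 0 ψ, S j 0 ψ⟫_ℂ = 0 := by
  set m := ⟪R i 0 (adjoint (S j 0) ψ), ψ⟫_ℂ
  have hS_side : ⟪R i 0 ψ, S j 0 ψ⟫_ℂ = (β j : ℂ) ^ 2 * m :=
    hS.inner_apply_right hβ (hR.1.1 i 0) j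
  have hR_side : ⟪S j 0 ψ, R i 0 ψ⟫_ℂ = (α i : ℂ) ^ 2 * starRingEnd ℂ m := by
    rw [hR.inner_apply_right hα (hS.1.1 j 0) i, inner_conj_symm, ← adjoint_inner_left,
      adjoint_inner_right]
  have hm : ((α i : ℂ) ^ 2 - (β j : ℂ) ^ 2) * starRingEnd ℂ m = 0 := by
    rw [sub_mul, ← hR_side, ← inner_conj_symm, hS_side, map_mul, map_pow, Complex.conj_ofReal,
      sub_self]
  have hne' : (α i : ℂ) ^ 2 - (β j : ℂ) ^ 2 ≠ 0 := sub_ne_zero.2 (by exact_mod_cast hne)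
  rw [hS_side, (map_eq_zero _).1 ((mul_eq_zero.1 hm).resolve_left hne'), mul_zero]

end MonopartiteProtocol

lemma countable_setOf_protocol_coeff [TopologicalSpace.SeparableSpace H]
    (M : VonNeumannAlgebra H) (d : ℕ) [NeZero d] (ψ : H) :
    {r : ℝ | 0 < r ∧ ∃ (α : Fin d → ℝ) (R : Fin d → Fin d → H →L[ℂ] H) (i : Fin d),
      ∑ k, α k ^ 2 = 1 ∧ MonopartiteProtocol M α R ψ ∧ α i = r}.Countable := by
  set V := {r : ℝ | _}
  refine Set.countable_coe_iff.1 ?_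
  choose α R i hα hR hαi using fun r : V => r.2.2
  refine Pairwise.countable_of_inner_eq_zero (𝕜 := ℂ) (v := fun r => R r (i r) 0 ψ)
    (fun r h => ?_) (fun r s hrs => (hR r).inner_apply_eq_zero (hα r) (hR s) (hα s) ?_)
  · have hnorm := (hR r).norm_apply_sq (i r)
    rw [h, norm_zero, zero_pow two_ne_zero, hαi r] at hnorm
    exact r.2.1.ne' (pow_eq_zero_iff two_ne_zero |>.1 hnorm.symm)
  · rw [hαi r, hαi s, Ne, sq_eq_sq₀ r.2.1.le s.2.1.le]
    exact Subtype.coe_ne_coe.2 hrs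

theorem embezzlable_tuples_countable_general
    {H : Type*} [NormedAddCommGroup H] [InnerProductSpace ℂ H] [CompleteSpace H]
    [TopologicalSpace.SeparableSpace H]
    (M : VonNeumannAlgebra H) {d : ℕ} [NeZero d]
    (ψ : H) :
    Set.Countable {α : Fin d → ℝ |
      (∀ i, 0 < α i) ∧ (∑ i, (α i) ^ 2 = 1) ∧
        ∃ R : Fin d → Fin d → H →L[ℂ] H, MonopartiteProtocol M α R ψ} := by
  refine (Set.countable_univ_pi fun _ => countable_setOf_protocol_coeff M d ψ).mono ?_
  rintro α ⟨hpos, hα, R, hR⟩ i -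
  exact ⟨hpos i, α, R, i, hα, hR, rfl⟩

/-- If `H` is a separable Hilbert space, `M ⊆ B(H)` a von Neumann algebra, `d ≥ 2` and
`ψ ∈ H` a unit vector, then the set of Schmidt-coefficient tuples `α` for which some
contraction `R` in `M_d ⊗ M` makes `(R, ψ)` a monopartite exact embezzlement protocol for
`α` in `(M, H)` is countable. -/
theorem embezzlable_tuples_countable
    {H : Type*} [NormedAddCommGroup H] [InnerProductSpace ℂ H] [CompleteSpace H]
    [TopologicalSpace.SeparableSpace H]
    (M : VonNeumannAlgebra H) {d : ℕ} [NeZero d] (hd : 2 ≤ d)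
    (ψ : H) (hψ : ‖ψ‖ = 1) :
    Set.Countable {α : Fin d → ℝ |
      (∀ i, 0 < α i) ∧ (∑ i, (α i) ^ 2 = 1) ∧
        ∃ R : Fin d → Fin d → H →L[ℂ] H, MonopartiteProtocol M α R ψ} :=
  embezzlable_tuples_countable_general M ψ
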